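/- arXiv:cs/0602062 — 3 statements merged into one kernel-verified Lean document; each statement's English description precedes it below -/
import Mathlib

section
/- Let Σ be a finite nonempty alphabet, P a stochastic language over Σ, and let A = (ι, (T_x)_{x∈Σ}, τ) be a multiplicity automaton with finite state set Q that is a reduced representation of P. Suppose C_A > 0 and ρ_A ∈ (0,1) are such that for every integer k ≥ 0 and all states q, q' ∈ Q, Σ_{u∈Σ^k} |T_u(q,q')| ≤ C_A·ρ_A^k. Then there exists α > 0 such that every multiplicity automaton B = (ι_B, (T^B_x)_{x∈Σ}, τ_B) with the same state set Q satisfying |T^B_x(q,q') − T_x(q,q')| < α for all x ∈ Σ and q, q' ∈ Q has Σ_{w∈Σ*} |r_B(w)| < ∞, and if moreover B satisfies τ_B(q) + Σ_{x∈Σ} Σ_{q'∈Q} T^B_x(q,q') = 1 for every q ∈ Q and Σ_{q∈Q} ι_B(q) = 1, then Σ_{k≥0} Σ_{w∈Σ^k} r_{B,q}(w) = 1 for every state q ∈ Q and Σ_{w∈Σ*} r_B(w) = 1. -/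
open scoped BigOperators Matrix

/-- A stochastic language over the alphabet `A`: a nonnegative real-valued function on
words whose values are summable with sum `1`. -/
def IsStochastic {A : Type*} (p : List A → ℝ) : Prop :=
  (∀ w, 0 ≤ p w) ∧ HasSum p 1

/-- The matrix associated to a word: the product of the letter matrices. -/
def wordMat {A Q : Type*} [Fintype Q] [DecidableEq Q] (T : A → Matrix Q Q ℝ)
    (w : List A) : Matrix Q Q ℝ :=
  (w.map T).prod

/-- The series computed by the multiplicity automaton `(ι, T, τ)`. -/
def maSeries {A Q : Type*} [Fintype Q] [DecidableEq Q] (ι τ : Q → ℝ)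
    (T : A → Matrix Q Q ℝ) (w : List A) : ℝ :=
  ι ⬝ᵥ (wordMat T w).mulVec τ

/-- The series of state `q` of the multiplicity automaton. -/
def stateSeries {A Q : Type*} [Fintype Q] [DecidableEq Q] (τ : Q → ℝ)
    (T : A → Matrix Q Q ℝ) (q : Q) (w : List A) : ℝ :=
  (wordMat T w).mulVec τ q

/-- `(ι, T, τ)` is a reduced representation of the stochastic language `P`. -/
def IsReducedRep {A Q : Type*} [Fintype Q] [DecidableEq Q] (ι τ : Q → ℝ)
    (T : A → Matrix Q Q ℝ) (P : List A → ℝ) : Prop :=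
  maSeries ι τ T = P ∧ (∀ q, IsStochastic (stateSeries τ T q)) ∧
    LinearIndependent ℝ (stateSeries τ T)

section Aux

variable {A Q : Type*} [Fintype A] [Fintype Q] [DecidableEq Q]

private lemma wordMat_nil (T : A → Matrix Q Q ℝ) : wordMat T ([] : List A) = 1 := rfl

private lemma wordMat_cons (T : A → Matrix Q Q ℝ) (x : A) (u : List A) :
    wordMat T (x :: u) = T x * wordMat T u := by
  simp [wordMat]

private lemma wordMat_concat (T : A → Matrix Q Q ℝ) (u : List A) (x : A) :
    wordMat T (u ++ [x]) = wordMat T u * T x := by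
  simp [wordMat]

private lemma ofFn_snoc' {k : ℕ} (f : Fin k → A) (x : A) :
    List.ofFn (Fin.snoc f x : Fin (k + 1) → A) = List.ofFn f ++ [x] := by
  rw [List.ofFn_succ']
  simp [List.concat_eq_append]

private lemma sum_tuple_succ_left {M : Type*} [AddCommMonoid M] (g : List A → M) (k : ℕ) :
    ∑ f : Fin (k + 1) → A, g (List.ofFn f)
      = ∑ x : A, ∑ f : Fin k → A, g (x :: List.ofFn f) := by
  calc ∑ f : Fin (k + 1) → A, g (List.ofFn f)
      = ∑ p : A × (Fin k → A), g (List.ofFn ((Fin.consEquiv (fun _ => A)) p)) :=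
        (Equiv.sum_comp (Fin.consEquiv (fun _ : Fin (k + 1) => A))
          (fun f => g (List.ofFn f))).symm
    _ = ∑ x : A, ∑ f : Fin k → A, g (x :: List.ofFn f) := by
        rw [Fintype.sum_prod_type]
        exact Finset.sum_congr rfl fun x _ => Finset.sum_congr rfl fun f _ => by
          simp [Fin.consEquiv, List.ofFn_succ]

private lemma sum_tuple_succ_right {M : Type*} [AddCommMonoid M] (g : List A → M) (k : ℕ) :
    ∑ f : Fin (k + 1) → A, g (List.ofFn f)
      = ∑ x : A, ∑ f : Fin k → A, g (List.ofFn f ++ [x]) := by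
  calc ∑ f : Fin (k + 1) → A, g (List.ofFn f)
      = ∑ p : A × (Fin k → A), g (List.ofFn ((Fin.snocEquiv (fun _ => A)) p)) :=
        (Equiv.sum_comp (Fin.snocEquiv (fun _ : Fin (k + 1) => A))
          (fun f => g (List.ofFn f))).symm
    _ = ∑ x : A, ∑ f : Fin k → A, g (List.ofFn f ++ [x]) := by
        rw [Fintype.sum_prod_type]
        exact Finset.sum_congr rfl fun x _ => Finset.sum_congr rfl fun f _ =>
          congrArg g (ofFn_snoc' f x)

/-- bounding sums of absolute entries of products of two families of matrices. -/
private lemma prod_abs_sum_le {ι κ : Type*} [Fintype ι] [Fintype κ]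
    (F : ι → Matrix Q Q ℝ) (G : κ → Matrix Q Q ℝ) (b c : ℝ)
    (hb : ∀ q q', ∑ i : ι, |F i q q'| ≤ b) (hc : ∀ q q', ∑ j : κ, |G j q q'| ≤ c)
    (hb0 : 0 ≤ b) (hc0 : 0 ≤ c) (q q' : Q) :
    ∑ i : ι, ∑ j : κ, |(F i * G j) q q'| ≤ (Fintype.card Q : ℝ) * b * c := by
  have step1 : ∑ i : ι, ∑ j : κ, |(F i * G j) q q'|
      ≤ ∑ i : ι, ∑ j : κ, ∑ r : Q, |F i q r| * |G j r q'| := by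
    refine Finset.sum_le_sum fun i _ => Finset.sum_le_sum fun j _ => ?_
    rw [Matrix.mul_apply]
    refine (Finset.abs_sum_le_sum_abs _ _).trans ?_
    exact Finset.sum_le_sum fun r _ => (abs_mul _ _).le
  have step2 : ∑ i : ι, ∑ j : κ, ∑ r : Q, |F i q r| * |G j r q'|
      = ∑ r : Q, (∑ i : ι, |F i q r|) * (∑ j : κ, |G j r q'|) := by
    have e1 : ∀ i : ι, ∑ j : κ, ∑ r : Q, |F i q r| * |G j r q'|
        = ∑ r : Q, |F i q r| * ∑ j : κ, |G j r q'| := by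
      intro i
      rw [Finset.sum_comm]
      exact Finset.sum_congr rfl fun r _ => (Finset.mul_sum _ _ _).symm
    simp_rw [e1]
    rw [Finset.sum_comm]
    refine Finset.sum_congr rfl fun r _ => ?_
    rw [Finset.sum_mul]
  have step3 : ∑ r : Q, (∑ i : ι, |F i q r|) * (∑ j : κ, |G j r q'|)
      ≤ ∑ _r : Q, b * c := by
    refine Finset.sum_le_sum fun r _ => ?_
    have h1 : 0 ≤ ∑ j : κ, |G j r q'| := Finset.sum_nonneg fun _ _ => abs_nonneg _
    have h2 : 0 ≤ ∑ i : ι, |F i q r| := Finset.sum_nonneg fun _ _ => abs_nonneg _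
    exact mul_le_mul (hb q r) (hc r q') h1 hb0
  calc ∑ i : ι, ∑ j : κ, |(F i * G j) q q'|
      ≤ ∑ i : ι, ∑ j : κ, ∑ r : Q, |F i q r| * |G j r q'| := step1
    _ = ∑ r : Q, (∑ i : ι, |F i q r|) * (∑ j : κ, |G j r q'|) := step2
    _ ≤ ∑ _r : Q, b * c := step3
    _ = (Fintype.card Q : ℝ) * b * c := by
        rw [Finset.sum_const, Finset.card_univ, nsmul_eq_mul]; ring

set_option maxHeartbeats 1000000 in
private lemma key_bound (T TB : A → Matrix Q Q ℝ) (CA ρ α : ℝ)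
    (hρ0 : 0 ≤ ρ) (hα : 0 ≤ α) (hCA : 0 < CA)
    (hbound : ∀ (k : ℕ) (q q' : Q),
      ∑ f : Fin k → A, |wordMat T (List.ofFn f) q q'| ≤ CA * ρ ^ k)
    (hTB : ∀ x q q', |TB x q q' - T x q q'| ≤ α) (k : ℕ) :
    ∀ (j : ℕ) (q q' : Q),
      ∑ v : Fin j → A, ∑ u : Fin k → A,
        |(wordMat T (List.ofFn v) *
          (wordMat TB (List.ofFn u) - wordMat T (List.ofFn u))) q q'|
      ≤ CA * ρ ^ j *
        ((ρ + CA * (Fintype.card Q : ℝ) ^ 2 * (Fintype.card A : ℝ) * α) ^ k - ρ ^ k) := by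
  set n : ℝ := (Fintype.card Q : ℝ) with hn
  set m : ℝ := (Fintype.card A : ℝ) with hm
  have hn0 : 0 ≤ n := by positivity
  have hm0 : 0 ≤ m := by positivity
  set δ : ℝ := CA * n ^ 2 * m * α with hδ
  have hδ0 : 0 ≤ δ := by positivity
  induction k with
  | zero =>
      intro j q q'
      simp [wordMat]
  | succ k ih =>
      -- Sum of |TB-word| entries, length k
      have hE : ∀ q q' : Q, ∑ x : A, |TB x q q' - T x q q'| ≤ m * α := by
        intro q q'
        calc ∑ x : A, |TB x q q' - T x q q'| ≤ ∑ _x : A, α :=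
              Finset.sum_le_sum fun x _ => hTB x q q'
          _ = m * α := by rw [Finset.sum_const, Finset.card_univ, nsmul_eq_mul]
      have hR : ∀ q q' : Q, ∑ u : Fin k → A,
          |(wordMat TB (List.ofFn u) - wordMat T (List.ofFn u)) q q'|
            ≤ CA * ((ρ + δ) ^ k - ρ ^ k) := by
        intro q q'
        have h0 := ih 0 q q'
        rw [Fintype.sum_unique] at h0
        simpa [wordMat] using h0
      have ha : ∀ q q' : Q, ∑ u : Fin k → A, |wordMat TB (List.ofFn u) q q'|
          ≤ CA * (ρ + δ) ^ k := by
        intro q q'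
        have h1 : ∑ u : Fin k → A, |wordMat TB (List.ofFn u) q q'|
            ≤ ∑ u : Fin k → A, (|wordMat T (List.ofFn u) q q'|
              + |(wordMat TB (List.ofFn u) - wordMat T (List.ofFn u)) q q'|) := by
          refine Finset.sum_le_sum fun u _ => ?_
          have : wordMat TB (List.ofFn u) q q' = wordMat T (List.ofFn u) q q'
              + (wordMat TB (List.ofFn u) - wordMat T (List.ofFn u)) q q' := by
            simp
          rw [this]
          exact abs_add_le _ _
        rw [Finset.sum_add_distrib] at h1
        have := hbound k q q'
        have := hR q q'
        linarith
      intro j q q'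
      have hsplit : ∑ v : Fin j → A, ∑ u : Fin (k + 1) → A,
          |(wordMat T (List.ofFn v) *
            (wordMat TB (List.ofFn u) - wordMat T (List.ofFn u))) q q'|
          = ∑ v : Fin j → A, ∑ x : A, ∑ u : Fin k → A,
            |(wordMat T (List.ofFn v) *
              (wordMat TB (x :: List.ofFn u) - wordMat T (x :: List.ofFn u))) q q'| :=
        Finset.sum_congr rfl fun v _ => sum_tuple_succ_left
          (fun w => |(wordMat T (List.ofFn v) * (wordMat TB w - wordMat T w)) q q'|) k
      -- matrix identity
      have hmid : ∀ (v : Fin j → A) (x : A) (u : Fin k → A),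
          wordMat T (List.ofFn v) *
            (wordMat TB (x :: List.ofFn u) - wordMat T (x :: List.ofFn u))
          = wordMat T (List.ofFn v) * ((TB x - T x) * wordMat TB (List.ofFn u))
            + (wordMat T (List.ofFn v) * T x) *
              (wordMat TB (List.ofFn u) - wordMat T (List.ofFn u)) := by
        intro v x u
        rw [wordMat_cons, wordMat_cons]
        noncomm_ring
      -- the two sums
      have hS : ∑ v : Fin j → A, ∑ x : A, ∑ u : Fin k → A,
          |(wordMat T (List.ofFn v) *
            (wordMat TB (x :: List.ofFn u) - wordMat T (x :: List.ofFn u))) q q'|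
          ≤ (∑ v : Fin j → A, ∑ x : A, ∑ u : Fin k → A,
              |(wordMat T (List.ofFn v) *
                ((TB x - T x) * wordMat TB (List.ofFn u))) q q'|)
            + ∑ v : Fin j → A, ∑ x : A, ∑ u : Fin k → A,
              |((wordMat T (List.ofFn v) * T x) *
                (wordMat TB (List.ofFn u) - wordMat T (List.ofFn u))) q q'| := by
        rw [← Finset.sum_add_distrib]
        refine Finset.sum_le_sum fun v _ => ?_
        rw [← Finset.sum_add_distrib]
        refine Finset.sum_le_sum fun x _ => ?_
        rw [← Finset.sum_add_distrib]
        refine Finset.sum_le_sum fun u _ => ?_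
        rw [hmid v x u]
        exact abs_add_le _ _
      -- S1 bound
      have hS1 : ∑ v : Fin j → A, ∑ x : A, ∑ u : Fin k → A,
          |(wordMat T (List.ofFn v) *
            ((TB x - T x) * wordMat TB (List.ofFn u))) q q'|
          ≤ CA * ρ ^ j * (δ * (ρ + δ) ^ k) := by
        have hinner : ∀ q q' : Q, ∑ p : A × (Fin k → A),
            |((TB p.1 - T p.1) * wordMat TB (List.ofFn p.2)) q q'|
            ≤ n * (m * α) * (CA * (ρ + δ) ^ k) := by
          intro q q'
          rw [Fintype.sum_prod_type]
          exact prod_abs_sum_le (fun x => TB x - T x)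
            (fun u : Fin k → A => wordMat TB (List.ofFn u)) (m * α) (CA * (ρ + δ) ^ k)
            (fun q q' => by simpa [Matrix.sub_apply] using hE q q')
            ha (by positivity) (by positivity) q q'
        have houter := prod_abs_sum_le (fun v : Fin j → A => wordMat T (List.ofFn v))
          (fun p : A × (Fin k → A) => (TB p.1 - T p.1) * wordMat TB (List.ofFn p.2))
          (CA * ρ ^ j) (n * (m * α) * (CA * (ρ + δ) ^ k))
          (fun q q' => hbound j q q') hinner (by positivity) (by positivity) q q'
        have hrw : ∑ v : Fin j → A, ∑ x : A, ∑ u : Fin k → A,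
            |(wordMat T (List.ofFn v) *
              ((TB x - T x) * wordMat TB (List.ofFn u))) q q'|
            = ∑ v : Fin j → A, ∑ p : A × (Fin k → A),
              |(wordMat T (List.ofFn v) *
                ((TB p.1 - T p.1) * wordMat TB (List.ofFn p.2))) q q'| :=
          Finset.sum_congr rfl fun v _ =>
            (Fintype.sum_prod_type (f := fun p : A × (Fin k → A) =>
              |(wordMat T (List.ofFn v) *
                ((TB p.1 - T p.1) * wordMat TB (List.ofFn p.2))) q q'|)).symm
        rw [hrw]
        refine houter.trans (le_of_eq ?_)
        rw [hδ]; ring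
      -- S2 bound
      have hS2 : ∑ v : Fin j → A, ∑ x : A, ∑ u : Fin k → A,
          |((wordMat T (List.ofFn v) * T x) *
            (wordMat TB (List.ofFn u) - wordMat T (List.ofFn u))) q q'|
          ≤ CA * ρ ^ (j + 1) * ((ρ + δ) ^ k - ρ ^ k) := by
        have hrw : ∑ v : Fin j → A, ∑ x : A, ∑ u : Fin k → A,
            |((wordMat T (List.ofFn v) * T x) *
              (wordMat TB (List.ofFn u) - wordMat T (List.ofFn u))) q q'|
            = ∑ v : Fin (j + 1) → A, ∑ u : Fin k → A,
              |(wordMat T (List.ofFn v) *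
                (wordMat TB (List.ofFn u) - wordMat T (List.ofFn u))) q q'| := by
          rw [sum_tuple_succ_right (fun w => ∑ u : Fin k → A,
            |(wordMat T w * (wordMat TB (List.ofFn u) - wordMat T (List.ofFn u))) q q'|) j]
          rw [Finset.sum_comm]
          exact Finset.sum_congr rfl fun v _ => Finset.sum_congr rfl fun x _ =>
            Finset.sum_congr rfl fun u _ => by rw [wordMat_concat]
        rw [hrw]
        exact ih (j + 1) q q'
      -- combine
      rw [hsplit]
      refine hS.trans ((add_le_add hS1 hS2).trans (le_of_eq ?_))
      ring

private lemma tb_bound (T TB : A → Matrix Q Q ℝ) (CA ρ α ρ' : ℝ)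
    (hρ0 : 0 ≤ ρ) (hα : 0 ≤ α) (hCA : 0 < CA)
    (hρ' : ρ + CA * (Fintype.card Q : ℝ) ^ 2 * (Fintype.card A : ℝ) * α ≤ ρ')
    (hbound : ∀ (k : ℕ) (q q' : Q),
      ∑ f : Fin k → A, |wordMat T (List.ofFn f) q q'| ≤ CA * ρ ^ k)
    (hTB : ∀ x q q', |TB x q q' - T x q q'| ≤ α) (k : ℕ) (q q' : Q) :
    ∑ u : Fin k → A, |wordMat TB (List.ofFn u) q q'| ≤ CA * ρ' ^ k := by
  set δ : ℝ := CA * (Fintype.card Q : ℝ) ^ 2 * (Fintype.card A : ℝ) * α with hδ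
  have hδ0 : 0 ≤ δ := by positivity
  have hR : ∑ u : Fin k → A,
      |(wordMat TB (List.ofFn u) - wordMat T (List.ofFn u)) q q'|
        ≤ CA * ((ρ + δ) ^ k - ρ ^ k) := by
    have h0 := key_bound T TB CA ρ α hρ0 hα hCA hbound hTB k 0 q q'
    rw [Fintype.sum_unique] at h0
    simpa [wordMat] using h0
  have h1 : ∑ u : Fin k → A, |wordMat TB (List.ofFn u) q q'|
      ≤ ∑ u : Fin k → A, (|wordMat T (List.ofFn u) q q'|
        + |(wordMat TB (List.ofFn u) - wordMat T (List.ofFn u)) q q'|) := by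
    refine Finset.sum_le_sum fun u _ => ?_
    have h2 : wordMat TB (List.ofFn u) q q' = wordMat T (List.ofFn u) q q'
        + (wordMat TB (List.ofFn u) - wordMat T (List.ofFn u)) q q' := by simp
    rw [h2]
    exact abs_add_le _ _
  rw [Finset.sum_add_distrib] at h1
  have h3 := hbound k q q'
  have h5 : CA * (ρ + δ) ^ k ≤ CA * ρ' ^ k := by
    have := pow_le_pow_left₀ (by positivity) hρ' k
    exact mul_le_mul_of_nonneg_left this hCA.le
  linarith

end Aux

theorem statement1 {A Q : Type*} [Fintype A] [Nonempty A] [Fintype Q] [DecidableEq Q]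
    (P : List A → ℝ) (hP : IsStochastic P)
    (ι τ : Q → ℝ) (T : A → Matrix Q Q ℝ) (hred : IsReducedRep ι τ T P)
    (CA ρA : ℝ) (hCA : 0 < CA) (hρA : ρA ∈ Set.Ioo (0 : ℝ) 1)
    (hbound : ∀ (k : ℕ) (q q' : Q),
      ∑ f : Fin k → A, |wordMat T (List.ofFn f) q q'| ≤ CA * ρA ^ k) :
    ∃ α > (0 : ℝ), ∀ (ιB τB : Q → ℝ) (TB : A → Matrix Q Q ℝ),
      (∀ (x : A) (q q' : Q), |TB x q q' - T x q q'| < α) →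
      Summable (fun w : List A => |maSeries ιB τB TB w|) ∧
      (((∀ q : Q, τB q + ∑ x : A, ∑ q' : Q, TB x q q' = 1) ∧ ∑ q : Q, ιB q = 1) →
        (∀ q : Q,
          HasSum (fun k : ℕ => ∑ f : Fin k → A, stateSeries τB TB q (List.ofFn f)) 1) ∧
        HasSum (maSeries ιB τB TB) 1) := by
  classical
  obtain ⟨hρA0, hρA1⟩ := hρA
  set c : ℝ := CA * (Fintype.card Q : ℝ) ^ 2 * (Fintype.card A : ℝ) with hc
  have hc0 : 0 ≤ c := by positivity
  set α : ℝ := (1 - ρA) / (2 * (c + 1)) with hα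
  have hα0 : 0 < α := div_pos (by linarith) (by positivity)
  refine ⟨α, hα0, ?_⟩
  intro ιB τB TB hclose
  have hTBle : ∀ x q q', |TB x q q' - T x q q'| ≤ α := fun x q q' => (hclose x q q').le
  set ρ' : ℝ := ρA + c * α with hρ'def
  have hρ'0 : 0 < ρ' := by
    have : 0 ≤ c * α := by positivity
    rw [hρ'def]; linarith
  have hρ'1 : ρ' < 1 := by
    have hlt : c * α < 1 - ρA := by
      rw [hα, show c * ((1 - ρA) / (2 * (c + 1))) = c * (1 - ρA) / (2 * (c + 1)) from by ring,
        div_lt_iff₀ (by positivity)]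
      nlinarith
    rw [hρ'def]; linarith
  have hA : ∀ (k : ℕ) (q q' : Q),
      ∑ u : Fin k → A, |wordMat TB (List.ofFn u) q q'| ≤ CA * ρ' ^ k := by
    intro k q q'
    refine tb_bound T TB CA ρA α ρ' hρA0.le hα0.le hCA ?_ hbound hTBle k q q'
    rw [hρ'def, hc]
  -- Part 1 : absolute summability
  have hma : ∀ k : ℕ, ∑ f : Fin k → A, |maSeries ιB τB TB (List.ofFn f)|
      ≤ (∑ q : Q, ∑ q' : Q, |ιB q| * (CA * |τB q'|)) * ρ' ^ k := by
    intro k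
    have e : ∀ w : List A, maSeries ιB τB TB w
        = ∑ q : Q, ∑ q' : Q, ιB q * (wordMat TB w q q' * τB q') := by
      intro w
      simp [maSeries, dotProduct, Matrix.mulVec, Finset.mul_sum]
    have h1 : ∀ w : List A, |maSeries ιB τB TB w|
        ≤ ∑ q : Q, ∑ q' : Q, |ιB q| * (|wordMat TB w q q'| * |τB q'|) := by
      intro w
      rw [e w]
      refine (Finset.abs_sum_le_sum_abs _ _).trans (Finset.sum_le_sum fun q _ => ?_)
      refine (Finset.abs_sum_le_sum_abs _ _).trans (Finset.sum_le_sum fun q' _ => ?_)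
      rw [abs_mul, abs_mul]
    calc ∑ f : Fin k → A, |maSeries ιB τB TB (List.ofFn f)|
        ≤ ∑ f : Fin k → A, ∑ q : Q, ∑ q' : Q,
            |ιB q| * (|wordMat TB (List.ofFn f) q q'| * |τB q'|) :=
          Finset.sum_le_sum fun f _ => h1 _
      _ = ∑ q : Q, ∑ q' : Q,
            |ιB q| * ((∑ f : Fin k → A, |wordMat TB (List.ofFn f) q q'|) * |τB q'|) := by
          rw [Finset.sum_comm]
          refine Finset.sum_congr rfl fun q _ => ?_
          rw [Finset.sum_comm]
          refine Finset.sum_congr rfl fun q' _ => ?_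
          rw [Finset.sum_mul, Finset.mul_sum]
      _ ≤ ∑ q : Q, ∑ q' : Q, |ιB q| * ((CA * ρ' ^ k) * |τB q'|) := by
          refine Finset.sum_le_sum fun q _ => Finset.sum_le_sum fun q' _ => ?_
          exact mul_le_mul_of_nonneg_left
            (mul_le_mul_of_nonneg_right (hA k q q') (abs_nonneg _)) (abs_nonneg _)
      _ = (∑ q : Q, ∑ q' : Q, |ιB q| * (CA * |τB q'|)) * ρ' ^ k := by
          rw [Finset.sum_mul]
          refine Finset.sum_congr rfl fun q _ => ?_
          rw [Finset.sum_mul]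
          refine Finset.sum_congr rfl fun q' _ => ?_
          ring
  have hsig : Summable (fun p : (Σ k : ℕ, Fin k → A) =>
      |maSeries ιB τB TB (List.ofFn p.2)|) := by
    refine (summable_sigma_of_nonneg (fun p => abs_nonneg _)).mpr
      ⟨fun k => (hasSum_fintype _).summable, ?_⟩
    refine Summable.of_nonneg_of_le (fun k => ?_) (fun k => ?_)
      ((summable_geometric_of_lt_one hρ'0.le hρ'1).mul_left
        (∑ q : Q, ∑ q' : Q, |ιB q| * (CA * |τB q'|)))
    · rw [tsum_fintype]
      exact Finset.sum_nonneg fun _ _ => abs_nonneg _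
    · rw [tsum_fintype]
      exact hma k
  have hsumabs : Summable (fun w : List A => |maSeries ιB τB TB w|) := by
    refine (Equiv.summable_iff (List.equivSigmaTuple (α := A)).symm).mp ?_
    have heq : ((fun w : List A => |maSeries ιB τB TB w|) ∘
        (List.equivSigmaTuple (α := A)).symm)
        = fun p : (Σ k : ℕ, Fin k → A) => |maSeries ιB τB TB (List.ofFn p.2)| := by
      funext p
      simp [List.equivSigmaTuple]
    rw [heq]
    exact hsig
  refine ⟨hsumabs, ?_⟩
  rintro ⟨hτ, hι⟩
  set M : Matrix Q Q ℝ := ∑ x : A, TB x with hM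
  have hpow : ∀ k : ℕ, (∑ f : Fin k → A, wordMat TB (List.ofFn f)) = M ^ k := by
    intro k
    induction k with
    | zero => simp [wordMat]
    | succ k ih =>
        rw [sum_tuple_succ_left (fun w => wordMat TB w) k]
        simp_rw [wordMat_cons]
        rw [show (∑ x : A, ∑ f : Fin k → A, TB x * wordMat TB (List.ofFn f))
            = ∑ x : A, TB x * (∑ f : Fin k → A, wordMat TB (List.ofFn f)) from
          Finset.sum_congr rfl fun x _ => (Finset.mul_sum _ _ _).symm]
        rw [ih, ← Finset.sum_mul, ← hM, pow_succ']
  have hMk : ∀ (k : ℕ) (q q' : Q), |(M ^ k) q q'| ≤ CA * ρ' ^ k := by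
    intro k q q'
    rw [← hpow k, Matrix.sum_apply]
    exact (Finset.abs_sum_le_sum_abs _ _).trans (hA k q q')
  have hstate1 : ∀ q : Q,
      HasSum (fun k : ℕ => ∑ f : Fin k → A, stateSeries τB TB q (List.ofFn f)) 1 := by
    intro q
    have hs : ∀ k : ℕ, ∑ f : Fin k → A, stateSeries τB TB q (List.ofFn f)
        = ∑ q' : Q, (M ^ k) q q' * τB q' := by
      intro k
      rw [← hpow k]
      have e : ∀ f : Fin k → A, stateSeries τB TB q (List.ofFn f)
          = ∑ q' : Q, wordMat TB (List.ofFn f) q q' * τB q' := by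
        intro f
        simp [stateSeries, Matrix.mulVec, dotProduct]
      simp_rw [e, Matrix.sum_apply, Finset.sum_mul]
      exact Finset.sum_comm
    have htauB : ∀ q' : Q, τB q' = 1 - ∑ q'' : Q, M q' q'' := by
      intro q'
      have h := hτ q'
      have e : ∑ x : A, ∑ q'' : Q, TB x q' q'' = ∑ q'' : Q, M q' q'' := by
        rw [Finset.sum_comm]
        exact Finset.sum_congr rfl fun q'' _ => (Matrix.sum_apply q' q'' _ _).symm
      rw [e] at h
      linarith
    have htel : ∀ k : ℕ, ∑ q' : Q, (M ^ k) q q' * τB q'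
        = (∑ q' : Q, (M ^ k) q q') - ∑ q' : Q, (M ^ (k + 1)) q q' := by
      intro k
      have e1 : ∑ q' : Q, (M ^ k) q q' * τB q'
          = ∑ q' : Q, ((M ^ k) q q' - ∑ q'' : Q, (M ^ k) q q' * M q' q'') := by
        refine Finset.sum_congr rfl fun q' _ => ?_
        rw [htauB q', mul_sub, mul_one, Finset.mul_sum]
      rw [e1, Finset.sum_sub_distrib]
      congr 1
      rw [Finset.sum_comm]
      refine Finset.sum_congr rfl fun q'' _ => ?_
      rw [pow_succ, Matrix.mul_apply]
    have hgb : ∀ N : ℕ, |∑ q' : Q, (M ^ N) q q'|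
        ≤ ((Fintype.card Q : ℝ) * CA) * ρ' ^ N := by
      intro N
      refine (Finset.abs_sum_le_sum_abs _ _).trans ?_
      calc ∑ q' : Q, |(M ^ N) q q'| ≤ ∑ _q' : Q, CA * ρ' ^ N :=
            Finset.sum_le_sum fun q' _ => hMk N q q'
        _ = ((Fintype.card Q : ℝ) * CA) * ρ' ^ N := by
            rw [Finset.sum_const, Finset.card_univ, nsmul_eq_mul]; ring
    have hg0 : Filter.Tendsto (fun N : ℕ => ∑ q' : Q, (M ^ N) q q')
        Filter.atTop (nhds 0) := by
      refine squeeze_zero_norm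
        (a := fun N : ℕ => ((Fintype.card Q : ℝ) * CA) * ρ' ^ N) (fun N => ?_) ?_
      · rw [Real.norm_eq_abs]; exact hgb N
      · have := (tendsto_pow_atTop_nhds_zero_of_lt_one hρ'0.le hρ'1).const_mul
          ((Fintype.card Q : ℝ) * CA)
        simpa using this
    have hsummable : Summable
        (fun k : ℕ => ∑ f : Fin k → A, stateSeries τB TB q (List.ofFn f)) := by
      refine Summable.of_abs ?_
      refine Summable.of_nonneg_of_le (fun k => abs_nonneg _) (fun k => ?_)
        ((summable_geometric_of_lt_one hρ'0.le hρ'1).mul_left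
          (∑ q' : Q, CA * |τB q'|))
      rw [hs k]
      refine (Finset.abs_sum_le_sum_abs _ _).trans ?_
      calc ∑ q' : Q, |(M ^ k) q q' * τB q'|
          ≤ ∑ q' : Q, (CA * ρ' ^ k) * |τB q'| := by
            refine Finset.sum_le_sum fun q' _ => ?_
            rw [abs_mul]
            exact mul_le_mul_of_nonneg_right (hMk k q q') (abs_nonneg _)
        _ = (∑ q' : Q, CA * |τB q'|) * ρ' ^ k := by
            rw [Finset.sum_mul]
            exact Finset.sum_congr rfl fun q' _ => by ring
    rw [hsummable.hasSum_iff_tendsto_nat]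
    have hpartial : ∀ N : ℕ, ∑ k ∈ Finset.range N,
        (∑ f : Fin k → A, stateSeries τB TB q (List.ofFn f))
        = 1 - ∑ q' : Q, (M ^ N) q q' := by
      intro N
      have e1 : ∀ k, (∑ f : Fin k → A, stateSeries τB TB q (List.ofFn f))
          = (fun j : ℕ => ∑ q' : Q, (M ^ j) q q') k
            - (fun j : ℕ => ∑ q' : Q, (M ^ j) q q') (k + 1) := by
        intro k
        rw [hs k, htel k]
      rw [Finset.sum_congr rfl fun k _ => e1 k,
        Finset.sum_range_sub' (fun j : ℕ => ∑ q' : Q, (M ^ j) q q') N]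
      congr 1
      simp [Matrix.one_apply]
    refine Filter.Tendsto.congr (fun N => (hpartial N).symm) ?_
    have := hg0.const_sub 1
    simpa using this
  refine ⟨hstate1, ?_⟩
  have hmaw : ∀ w : List A, maSeries ιB τB TB w
      = ∑ q : Q, ιB q * stateSeries τB TB q w := by
    intro w
    simp [maSeries, stateSeries, Matrix.mulVec, dotProduct]
  have hlev : ∀ k : ℕ, ∑ f : Fin k → A, maSeries ιB τB TB (List.ofFn f)
      = ∑ q : Q, ιB q * ∑ f : Fin k → A, stateSeries τB TB q (List.ofFn f) := by
    intro k
    simp_rw [hmaw, Finset.mul_sum]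
    exact Finset.sum_comm
  have hlevsum : HasSum
      (fun k : ℕ => ∑ f : Fin k → A, maSeries ιB τB TB (List.ofFn f)) 1 := by
    have h := hasSum_sum (s := (Finset.univ : Finset Q))
      (f := fun (q : Q) (k : ℕ) =>
        ιB q * ∑ f : Fin k → A, stateSeries τB TB q (List.ofFn f))
      (a := fun q : Q => ιB q * 1)
      (fun q _ => (hstate1 q).mul_left (ιB q))
    have e2 : (∑ q : Q, ιB q * 1) = 1 := by
      simpa using hι
    rw [e2] at h
    have e3 : (fun k : ℕ => ∑ q : Q, ιB q *
        ∑ f : Fin k → A, stateSeries τB TB q (List.ofFn f))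
        = fun k : ℕ => ∑ f : Fin k → A, maSeries ιB τB TB (List.ofFn f) :=
      funext fun k => (hlev k).symm
    rwa [e3] at h
  have hsum : Summable (maSeries ιB τB TB) := hsumabs.of_abs
  have hsig2 : Summable (fun p : (Σ k : ℕ, Fin k → A) =>
      maSeries ιB τB TB (List.ofFn p.2)) := by
    have h := (Equiv.summable_iff (List.equivSigmaTuple (α := A)).symm).mpr hsum
    have heq : (maSeries ιB τB TB ∘ (List.equivSigmaTuple (α := A)).symm)
        = fun p : (Σ k : ℕ, Fin k → A) => maSeries ιB τB TB (List.ofFn p.2) := by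
      funext p
      simp [List.equivSigmaTuple]
    rwa [heq] at h
  have hsigma : HasSum (fun p : (Σ k : ℕ, Fin k → A) =>
      maSeries ιB τB TB (List.ofFn p.2)) 1 :=
    HasSum.sigma_of_hasSum hlevsum (fun k => hasSum_fintype _) hsig2
  refine (Equiv.hasSum_iff (List.equivSigmaTuple (α := A)).symm).mp ?_
  have heq : (maSeries ιB τB TB ∘ (List.equivSigmaTuple (α := A)).symm)
      = fun p : (Σ k : ℕ, Fin k → A) => maSeries ιB τB TB (List.ofFn p.2) := by
    funext p
    simp [List.equivSigmaTuple]
  rw [heq]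
  exact hsigma
end

section
/- Let Σ be a finite nonempty alphabet, P a stochastic language over Σ, and let A = (ι, (T_x)_{x∈Σ}, τ) be a multiplicity automaton with finite state set Q that is a reduced representation of P. Then the letter-sum matrix M = Σ_{x∈Σ} T_x has spectral radius ρ(M) < 1. -/
open scoped BigOperators Matrix

/-- The spectral radius of a real square matrix: the maximum modulus of its complex
eigenvalues, i.e. the spectral radius of the corresponding complex matrix. -/
noncomputable def matSpectralRadius {Q : Type*} [Fintype Q] [DecidableEq Q]
    (M : Matrix Q Q ℝ) : ENNReal :=
  spectralRadius ℂ (M.map Complex.ofReal)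

/-!
Write `M = ∑ₓ Tₓ`, so that `Mⁿ = ∑_{|w| = n} T_w`. For every word `u` and state `q`, the
`q`-entry of `Mⁿ T_u τ` is `∑_{|w| = n} r_q(w u)`, a block of the convergent series `r_q`, so
`Mⁿ T_u τ → 0`. Linear independence of the state series `r_q` says exactly that the vectors
`T_u τ` span `ℝ^Q`, hence `Mⁿ → 0`. An eigenvector `v` for an eigenvalue `μ` of `M` then gives
`μⁿ v = Mⁿ v → 0`, so `|μ| < 1`.
-/

open Filter Topology

section Words

variable {A : Type*} [Fintype A]

theorem sum_prod_map_ofFn_eq_pow {R : Type*} [Semiring R] (f : A → R) (n : ℕ) :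
    ∑ w : Fin n → A, ((List.ofFn w).map f).prod = (∑ x, f x) ^ n := by
  induction n with
  | zero => simp
  | succ n ih =>
    rw [← (Fin.consEquiv fun _ => A).sum_comp, Fintype.sum_prod_type, pow_succ', ← ih,
      Finset.sum_mul_sum]
    simp [List.ofFn_succ]

theorem tendsto_sum_ofFn_of_summable {E : Type*} [NormedAddCommGroup E] [CompleteSpace E]
    {f : List A → E} (hf : Summable f) :
    Tendsto (fun n => ∑ w : Fin n → A, f (List.ofFn w)) atTop (𝓝 0) :=
  ((hf.comp_injective List.equivSigmaTuple.symm.injective).hasSum.sigma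
    fun _ => hasSum_fintype _).summable.tendsto_atTop_zero

end Words

theorem Submodule.span_range_eq_top_of_linearIndependent_eval {ι K Q : Type*} [Field K]
    [Fintype Q] (v : ι → Q → K) (h : LinearIndependent K fun q i => v i q) :
    span K (Set.range v) = ⊤ := by
  classical
  rw [← dualAnnihilator_eq_bot_iff, eq_bot_iff]
  intro φ hφ
  have hv (i : ι) : φ (v i) = 0 :=
    (mem_dualAnnihilator φ).1 hφ _ (subset_span ⟨i, rfl⟩)
  have hbasis : ∀ q, φ (fun j => if q = j then 1 else 0) = 0 := by
    refine Fintype.linearIndependent_iff.1 h _ (funext fun i => ?_)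
    simpa [LinearMap.pi_apply_eq_sum_univ φ (v i), mul_comm] using hv i
  refine (Pi.basisFun K Q).ext fun q => ?_
  rw [LinearMap.zero_apply, Pi.basisFun_apply, ← hbasis q]
  congr with j
  simp [Pi.single_apply, eq_comm]

theorem Matrix.tendsto_zero_of_tendsto_mulVec_of_span_eq_top {α m n R : Type*} [Fintype n]
    [CommRing R] [TopologicalSpace R] [IsTopologicalRing R] {l : Filter α}
    {B : α → Matrix m n R} {s : Set (n → R)} (hs : Submodule.span R s = ⊤)
    (hB : ∀ v ∈ s, Tendsto (fun a => B a *ᵥ v) l (𝓝 0)) : Tendsto B l (𝓝 0) := by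
  classical
  have hB' (v : n → R) : Tendsto (fun a => B a *ᵥ v) l (𝓝 0) := by
    induction (hs ▸ Submodule.mem_top : v ∈ Submodule.span R s) using Submodule.span_induction
      with
    | mem v hv => exact hB v hv
    | zero => simpa using tendsto_const_nhds
    | add _ _ _ _ h₁ h₂ => simpa [mulVec_add] using h₁.add h₂
    | smul c _ _ h => simpa [mulVec_smul] using h.const_smul c
  refine tendsto_pi_nhds.2 fun i => tendsto_pi_nhds.2 fun j => ?_
  simpa [mulVec_single] using tendsto_pi_nhds.1 (hB' (Pi.single j 1)) i

theorem Module.End.norm_lt_one_of_hasEigenvalue_of_tendsto_pow {𝕜 E : Type*} [NormedField 𝕜]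
    [NormedAddCommGroup E] [NormedSpace 𝕜 E] {f : Module.End 𝕜 E}
    (hf : ∀ v, Tendsto (fun n => (f ^ n) v) atTop (𝓝 0)) {μ : 𝕜} (hμ : f.HasEigenvalue μ) :
    ‖μ‖ < 1 := by
  obtain ⟨v, hv⟩ := hμ.exists_hasEigenvector
  have hpow : Tendsto (fun n => ‖μ‖ ^ n * ‖v‖) atTop (𝓝 0) := by
    simpa [hv.pow_apply, norm_smul] using (hf v).norm
  have := hpow.mul_const ‖v‖⁻¹
  simp only [zero_mul, mul_inv_cancel_right₀ (norm_ne_zero_iff.2 hv.2)] at this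
  simpa using tendsto_pow_atTop_nhds_zero_iff.1 this

theorem Matrix.spectralRadius_lt_one_of_tendsto_pow {𝕜 Q : Type*} [NormedField 𝕜] [Fintype Q]
    [DecidableEq Q] {N : Matrix Q Q 𝕜} (hN : Tendsto (fun n => N ^ n) atTop (𝓝 0)) :
    spectralRadius 𝕜 N < 1 := by
  have hlt : ∀ μ ∈ spectrum 𝕜 N, ‖μ‖ < 1 := by
    intro μ hμ
    refine Module.End.norm_lt_one_of_hasEigenvalue_of_tendsto_pow (f := N.toLin') (fun v => ?_)
      (Module.End.hasEigenvalue_iff_mem_spectrum.2 (by rwa [spectrum_toLin']))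
    have := ((continuous_id.matrix_mulVec (continuous_const (y := v))).tendsto 0).comp hN
    simpa [← toLin'_pow, Function.comp_def] using this
  have hfin := N.finite_spectrum
  rw [spectralRadius, ← hfin.coe_toFinset]
  simp_rw [Finset.mem_coe]
  rw [← Finset.sup_eq_iSup, Finset.sup_lt_iff zero_lt_one]
  intro μ hμ
  exact_mod_cast hlt μ (hfin.mem_toFinset.1 hμ)

theorem matSpectralRadius_lt_one_of_tendsto_pow {Q : Type*} [Fintype Q] [DecidableEq Q]
    {M : Matrix Q Q ℝ} (hM : Tendsto (fun n => M ^ n) atTop (𝓝 0)) :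
    matSpectralRadius M < 1 := by
  refine Matrix.spectralRadius_lt_one_of_tendsto_pow ?_
  have hpow (n : ℕ) : M.map Complex.ofReal ^ n = (M ^ n).map Complex.ofReal :=
    (map_pow Complex.ofRealHom.mapMatrix M n).symm
  simp only [hpow]
  simpa [Function.comp_def] using
    ((continuous_id.matrix_map Complex.continuous_ofReal).tendsto 0).comp hM

section Automaton

variable {A Q : Type*} [Fintype Q] [DecidableEq Q] (T : A → Matrix Q Q ℝ)

theorem wordMat_append (w u : List A) : wordMat T (w ++ u) = wordMat T w * wordMat T u := by
  simp [wordMat]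

variable [Fintype A]

theorem tendsto_pow_mulVec_wordMat_mulVec {τ : Q → ℝ} (hτ : ∀ q, Summable (stateSeries τ T q))
    (u : List A) : Tendsto (fun n => (∑ x, T x) ^ n *ᵥ (wordMat T u *ᵥ τ)) atTop (𝓝 0) := by
  refine tendsto_pi_nhds.2 fun q => ?_
  have hsum : Summable fun w => stateSeries τ T q (w ++ u) :=
    (hτ q).comp_injective (List.append_left_injective u)
  refine (tendsto_sum_ofFn_of_summable hsum).congr fun n => ?_
  simp only [stateSeries, wordMat_append, ← Matrix.mulVec_mulVec, ← sum_prod_map_ofFn_eq_pow,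
    Matrix.sum_mulVec, Finset.sum_apply]
  rfl

theorem tendsto_pow_sum_of_summable_of_linearIndependent {τ : Q → ℝ}
    (hτ : ∀ q, Summable (stateSeries τ T q)) (hli : LinearIndependent ℝ (stateSeries τ T)) :
    Tendsto (fun n => (∑ x, T x) ^ n) atTop (𝓝 0) :=
  Matrix.tendsto_zero_of_tendsto_mulVec_of_span_eq_top
    (Submodule.span_range_eq_top_of_linearIndependent_eval (fun u => wordMat T u *ᵥ τ) hli)
    (by rintro _ ⟨u, rfl⟩; exact tendsto_pow_mulVec_wordMat_mulVec T hτ u)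

end Automaton

theorem statement7_general {A Q : Type*} [Fintype A] [Fintype Q] [DecidableEq Q]
    (P : List A → ℝ)
    (ι τ : Q → ℝ) (T : A → Matrix Q Q ℝ) (hred : IsReducedRep ι τ T P) :
    matSpectralRadius (∑ x : A, T x) < 1 := by
  obtain ⟨-, hst, hli⟩ := hred
  exact matSpectralRadius_lt_one_of_tendsto_pow
    (tendsto_pow_sum_of_summable_of_linearIndependent T (fun q => (hst q).2.summable) hli)

theorem statement7 {A Q : Type*} [Fintype A] [Nonempty A] [Fintype Q] [DecidableEq Q]
    (P : List A → ℝ) (hP : IsStochastic P)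
    (ι τ : Q → ℝ) (T : A → Matrix Q Q ℝ) (hred : IsReducedRep ι τ T P) :
    matSpectralRadius (∑ x : A, T x) < 1 :=
  statement7_general P ι τ T hred
end

section
/- Let Σ be a finite nonempty alphabet, P a stochastic language over Σ, let u_0, u_1, …, u_n ∈ Σ* be words with P(u_iΣ*) > 0 for each i, and let α_1, …, α_n ∈ ℝ be such that u_0^{-1}P = Σ_{i=1}^n α_i·u_i^{-1}P. Then for μ-almost every ω ∈ Ω there exists K ∈ ℕ such that for every k ≥ K: P_{ω,k}(u_iΣ*) > 0 for each i ∈ {0,…,n}, and the system I({u_1,…,u_n}, u_0, ω, k, k^{-1/3}) has a solution. -/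
open scoped BigOperators
open MeasureTheory

/-- `pre w` is the set `wΣ*` of words having `w` as a prefix. -/
def pre {A : Type*} (w : List A) : Set (List A) := {v | w <+: v}

/-- The residualLang language `u⁻¹P` of `P` with respect to the word `u`. -/
noncomputable def residualLang {A : Type*} (P : List A → ℝ) (u w : List A) : ℝ :=
  P (u ++ w) / ∑' v : pre u, P (v : List A)

/-- The empirical probability of the set `X` among the first `m` samples of `ω`. -/
noncomputable def emp {A : Type*} (ω : ℕ → List A) (m : ℕ) (X : Set (List A)) : ℝ :=
  (∑ i ∈ Finset.range m, X.indicator (fun _ => (1 : ℝ)) (ω i)) / m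

/-- `x` is a solution of the system `I({u 0, …, u (n-1)}, v, ω, m, ε)`. -/
def IsSolution {A : Type*} {n : ℕ} (u : Fin n → List A) (v : List A)
    (ω : ℕ → List A) (m : ℕ) (ε : ℝ) (x : Fin n → ℝ) : Prop :=
  (∑ i, x i = 1) ∧
    ∀ w : List A, (∃ i < m, w <:+: ω i) →
      |emp ω m (pre (v ++ w)) / emp ω m (pre v) -
          ∑ i, x i * (emp ω m (pre (u i ++ w)) / emp ω m (pre (u i)))| ≤ ε

/-- Words over a countable alphabet carry the discrete (full) σ-algebra. -/
instance listMeasurableSpace {A : Type*} : MeasurableSpace (List A) := ⊤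

/-- `μ` is the infinite i.i.d. product of the law on `List A` given by `P`:
its finite-dimensional cylinder probabilities are the corresponding products. -/
def IsIIDProduct {A : Type*} (P : List A → ℝ) (μ : Measure (ℕ → List A)) : Prop :=
  ∀ (s : Finset ℕ) (E : ℕ → Set (List A)),
    μ {ω | ∀ i ∈ s, ω i ∈ E i} = ∏ i ∈ s, ∑' w : E i, ENNReal.ofReal (P (w : List A))

/-
The relation `u₀⁻¹P = ∑ αᵢ uᵢ⁻¹P`, summed over all continuations of a word `w`, gives the same
relation between the ratios `P(uᵢwΣ*) / P(uᵢΣ*)`; so `x = α` solves the empirical system once all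
empirical prefix probabilities are uniformly within `δ` of the true ones, the error being
`O(δ)` with constants depending only on `α` and `minᵢ P(uᵢΣ*)`.

For the uniform bound, order words lexicographically: every prefix set `wΣ*` is then an interval.
As in the Dvoretzky–Kiefer–Wolfowitz argument, closeness within `t` on `O(1/t)` fixed upper and
lower sets (chosen from the true distribution) gives closeness within `4t` on every interval.
Hoeffding's inequality bounds each of these deviations by `2 exp(-2kt²)` after `k` samples; with
`t ≍ k^{-1/3}` the failure probabilities `O(k^{1/3} exp(-c k^{1/3}))` are summable, and
Borel–Cantelli concludes.
-/

open ProbabilityTheory Filter Set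

section PrefixOrder
variable {A : Type*} [LinearOrder A]

theorem List.IsPrefix.of_lt_of_lt {v y z : List A} (hvy : v < y) (hyz : y < z) (hvz : v <+: z) :
    v <+: y := by
  induction v generalizing y z with
  | nil => exact List.nil_prefix
  | cons a v ih =>
    obtain ⟨s, rfl⟩ := hvz
    cases y with
    | nil => exact absurd hvy (List.not_lt_nil _)
    | cons b y =>
      obtain ⟨rfl, hvy, hyz⟩ : a = b ∧ v < y ∧ y < v ++ s := by
        rcases List.cons_lt_cons_iff.1 hvy with hab | ⟨rfl, hvy'⟩ <;>
          rcases List.cons_lt_cons_iff.1 hyz with hba | ⟨hba, hyz'⟩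
        · exact absurd (hab.trans hba) (lt_irrefl a)
        · exact absurd hab (hba ▸ lt_irrefl a)
        · exact absurd hba (lt_irrefl a)
        · exact ⟨rfl, hvy', hyz'⟩
      exact List.cons_prefix_cons.2 ⟨rfl, ih hvy hyz (List.prefix_append v s)⟩

theorem ordConnected_pre (v : List A) : (pre v).OrdConnected := by
  refine ⟨fun x (hx : v <+: x) z (hz : v <+: z) y hy => ?_⟩
  have hvy : v ≤ y := (le_of_not_gt hx.le).trans hy.1
  rcases hy.2.lt_or_eq with hyz | rfl
  · rcases hvy.lt_or_eq with hvy | rfl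
    · exact List.IsPrefix.of_lt_of_lt hvy hyz hz
    · exact List.prefix_refl v
  · exact hz

end PrefixOrder

theorem Set.OrdConnected.isUpperSet_upperClosure_diff {W : Type*} [Preorder W] {s : Set W}
    (hs : s.OrdConnected) : IsUpperSet (↑(upperClosure s) \ s) := by
  rintro y z hyz ⟨⟨a, ha, hay⟩, hy⟩
  exact ⟨⟨a, ha, hay.trans hyz⟩, fun hz => hy (hs.out ha hz ⟨hay, hyz⟩)⟩

theorem exists_nat_mul_lt_le_add {s t : ℝ} (hs : 0 < s) (ht : 0 < t) :
    ∃ j : ℕ, j * t < s ∧ s ≤ j * t + t := by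
  refine ⟨⌈s / t⌉₊ - 1, ?_, ?_⟩ <;>
  · have h1 : 1 ≤ ⌈s / t⌉₊ := Nat.one_le_iff_ne_zero.2 (Nat.ceil_pos.2 (div_pos hs ht)).ne'
    have hlt := Nat.ceil_lt_add_one (div_pos hs ht).le
    have hle := Nat.le_ceil (s / t)
    rw [Nat.cast_sub h1, Nat.cast_one]
    rw [div_le_iff₀ ht] at hle
    rw [← sub_lt_iff_lt_add, lt_div_iff₀ ht] at hlt
    nlinarith

section GridSets
variable {W : Type*} [LinearOrder W] [MeasurableSpace W]

/-- The `j`-th point of the Dvoretzky–Kiefer–Wolfowitz grid of mesh `t` for upper sets. -/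
def gridSet (ν : Measure W) (t : ℝ) (j : ℕ) : Set W :=
  upperBounds {x | j * t ≤ ν.real (Ici x)}

/-- Definitionally `gridSet` for the order dual. -/
def lowerGridSet (ν : Measure W) (t : ℝ) (j : ℕ) : Set W :=
  lowerBounds {x | j * t ≤ ν.real (Iic x)}

def IsGridClose (ν ν' : Measure W) (t : ℝ) : Prop :=
  ∀ j : ℕ, j * t ≤ 1 →
    |ν'.real (gridSet ν t j) - ν.real (gridSet ν t j)| ≤ t ∧
      |ν'.real (lowerGridSet ν t j) - ν.real (lowerGridSet ν t j)| ≤ t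

variable [Countable W]

theorem IsUpperSet.exists_lt_measureReal_Ici (ν : Measure W) [IsFiniteMeasure ν] {U : Set W}
    (hU : IsUpperSet U) {c : ℝ} (hc0 : 0 ≤ c) (hc : c < ν.real U) :
    ∃ x ∈ U, c < ν.real (Ici x) := by
  have hUnion : U = ⋃ x ∈ U, Ici x :=
    Subset.antisymm (fun y hy => mem_biUnion hy (mem_Ici.2 le_rfl))
      (iUnion₂_subset fun x hx _ hy => hU hy hx)
  have hdir : DirectedOn (Function.onFun (· ⊆ ·) Ici) U := fun x hx y hy =>
    ⟨min x y, by rcases min_choice x y with h | h <;> rw [h] <;> assumption,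
      Ici_subset_Ici.2 (min_le_left x y), Ici_subset_Ici.2 (min_le_right x y)⟩
  have hc' := (ENNReal.ofReal_lt_iff_lt_toReal hc0 (measure_ne_top ν U)).2 hc
  rw [hUnion, measure_biUnion_eq_iSup U.to_countable hdir] at hc'
  obtain ⟨x, hx, hcx⟩ := lt_biSup_iff.1 hc'
  exact ⟨x, hx, (ENNReal.ofReal_lt_iff_lt_toReal hc0 (measure_ne_top ν _)).1 hcx⟩

variable [DiscreteMeasurableSpace W]

theorem le_measureReal_gridSet (ν : Measure W) [IsProbabilityMeasure ν] {t : ℝ} {j : ℕ}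
    (hjt : j * t ≤ 1) : j * t ≤ ν.real (gridSet ν t j) := by
  set S := {x | j * t ≤ ν.real (Ici x)}
  have hcompl : (gridSet ν t j)ᶜ = ⋃ x ∈ S, Iio x := by
    ext y
    simp [gridSet, upperBounds, S]
  have hdir : DirectedOn (Function.onFun (· ⊆ ·) Iio) S := fun x hx y hy =>
    ⟨max x y, by rcases max_choice x y with h | h <;> rw [h] <;> assumption,
      Iio_subset_Iio (le_max_left x y), Iio_subset_Iio (le_max_right x y)⟩
  have hIio : ∀ x ∈ S, ν (Iio x) ≤ ENNReal.ofReal (1 - j * t) := fun x hx => by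
    rw [← ofReal_measureReal, ← compl_Ici, probReal_compl_eq_one_sub .of_discrete]
    exact ENNReal.ofReal_le_ofReal (by linarith [show j * t ≤ ν.real (Ici x) from hx])
  have hle : ν.real (gridSet ν t j)ᶜ ≤ 1 - j * t := by
    refine ENNReal.toReal_le_of_le_ofReal (by linarith) ?_
    rw [hcompl, measure_biUnion_eq_iSup S.to_countable hdir]
    exact iSup₂_le hIio
  rw [probReal_compl_eq_one_sub .of_discrete] at hle
  linarith

/-- Pick `j` with `j * t < ν U ≤ (j + 1) * t`: some tail `Ici x ⊆ U` has mass `> j * t`,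
so `gridSet ν t j ⊆ U`. -/
theorem IsUpperSet.measureReal_le_add (ν ν' : Measure W) [IsProbabilityMeasure ν]
    [IsFiniteMeasure ν'] {t : ℝ} (ht : 0 < t)
    (hgrid : ∀ j : ℕ, j * t ≤ 1 → ν.real (gridSet ν t j) ≤ ν'.real (gridSet ν t j) + t)
    {U : Set W} (hU : IsUpperSet U) : ν.real U ≤ ν'.real U + 2 * t := by
  rcases (measureReal_nonneg : 0 ≤ ν.real U).eq_or_lt with hs | hs
  · linarith [hs ▸ (measureReal_nonneg : 0 ≤ ν'.real U)]
  obtain ⟨j, hjs, hsj⟩ := exists_nat_mul_lt_le_add hs ht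
  obtain ⟨x, hxU, hx⟩ := hU.exists_lt_measureReal_Ici ν (by positivity) hjs
  have hjt : j * t ≤ 1 := hjs.le.trans (measureReal_le_one (μ := ν))
  have hsub : gridSet ν t j ⊆ U := fun y hy => hU (hy hx.le) hxU
  calc ν.real U ≤ ν.real (gridSet ν t j) + t := by linarith [le_measureReal_gridSet ν hjt]
    _ ≤ ν'.real (gridSet ν t j) + 2 * t := by linarith [hgrid j hjt]
    _ ≤ ν'.real U + 2 * t := by linarith [measureReal_mono (μ := ν') hsub]

variable {ν ν' : Measure W} [IsProbabilityMeasure ν] [IsProbabilityMeasure ν'] {t : ℝ}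

theorem IsUpperSet.abs_measureReal_sub_le (ht : 0 < t) (hclose : IsGridClose ν ν' t)
    {U : Set W} (hU : IsUpperSet U) : |ν'.real U - ν.real U| ≤ 2 * t := by
  have : Countable Wᵒᵈ := ‹Countable W›
  have : DiscreteMeasurableSpace Wᵒᵈ := ‹DiscreteMeasurableSpace W›
  have : @IsProbabilityMeasure Wᵒᵈ _ ν := ‹IsProbabilityMeasure ν›
  have : @IsFiniteMeasure Wᵒᵈ _ ν' := (inferInstance : IsFiniteMeasure ν')
  have hlow := hU.measureReal_le_add ν ν' ht fun j hj =>
    sub_le_iff_le_add'.1 (abs_sub_le_iff.1 (hclose j hj).1).2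
  have hup : ν.real Uᶜ ≤ ν'.real Uᶜ + 2 * t :=
    hU.compl.toDual.measureReal_le_add (W := Wᵒᵈ) ν ν' ht fun j hj =>
      sub_le_iff_le_add'.1 (abs_sub_le_iff.1 (hclose j hj).2).2
  rw [probReal_compl_eq_one_sub .of_discrete, probReal_compl_eq_one_sub .of_discrete] at hup
  exact abs_le.2 ⟨by linarith, by linarith⟩

theorem Set.OrdConnected.abs_measureReal_sub_le (ht : 0 < t) (hclose : IsGridClose ν ν' t)
    {s : Set W} (hs : s.OrdConnected) : |ν'.real s - ν.real s| ≤ 4 * t := by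
  set V : Set W := ↑(upperClosure s)
  have hs_eq : V \ (V \ s) = s := sdiff_sdiff_cancel_left subset_upperClosure
  have hV := (upperClosure s).upper.abs_measureReal_sub_le ht hclose
  have hVs := hs.isUpperSet_upperClosure_diff.abs_measureReal_sub_le ht hclose
  rw [← hs_eq, measureReal_sdiff sdiff_subset .of_discrete,
    measureReal_sdiff sdiff_subset .of_discrete]
  rw [abs_le] at hV hVs ⊢
  constructor <;> linarith [hV.1, hV.2, hVs.1, hVs.2]

end GridSets

namespace IsIIDProduct
variable {A : Type*} {P : List A → ℝ} {μ : Measure (ℕ → List A)} (hμ : IsIIDProduct P μ)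
include hμ

theorem isProbabilityMeasure : IsProbabilityMeasure μ :=
  ⟨by simpa using hμ ∅ fun _ => univ⟩

theorem measure_eval_preimage (i : ℕ) (X : Set (List A)) :
    μ ((fun ω => ω i) ⁻¹' X) = ∑' w : X, ENNReal.ofReal (P w) := by
  have h := hμ {i} fun _ => X
  simp only [Finset.mem_singleton, forall_eq, Finset.prod_singleton] at h
  exact h

theorem map_eval (i : ℕ) : μ.map (fun ω => ω i) = μ.map (fun ω => ω 0) := by
  ext X -
  rw [Measure.map_apply (measurable_pi_apply i) .of_discrete,
    Measure.map_apply (measurable_pi_apply 0) .of_discrete]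
  exact (hμ.measure_eval_preimage i X).trans (hμ.measure_eval_preimage 0 X).symm

theorem measureReal_map_eval (hP : IsStochastic P) (i : ℕ) (X : Set (List A)) :
    (μ.map (fun ω => ω i)).real X = ∑' w : X, P w := by
  rw [Measure.real, Measure.map_apply (measurable_pi_apply i) .of_discrete,
    hμ.measure_eval_preimage i X,
    ← ENNReal.ofReal_tsum_of_nonneg (f := fun w : X => P w) (fun _ => hP.1 _)
      (hP.2.summable.subtype X),
    ENNReal.toReal_ofReal (tsum_nonneg fun _ => hP.1 _)]

theorem iIndepFun : iIndepFun (fun i (ω : ℕ → List A) => ω i) μ := by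
  have := hμ.isProbabilityMeasure
  refine iIndepFun_iff_measure_inter_preimage_eq_mul.2 fun S E _ => ?_
  have hcyl : (⋂ i ∈ S, (fun ω : ℕ → List A => ω i) ⁻¹' E i) = {ω | ∀ i ∈ S, ω i ∈ E i} := by
    ext; simp
  rw [hcyl, hμ S E]
  exact Finset.prod_congr rfl fun i _ => (hμ.measure_eval_preimage i (E i)).symm

end IsIIDProduct

section Empirical
variable {A : Type*}

instance : DiscreteMeasurableSpace (List A) := ⟨fun _ => MeasurableSpace.measurableSet_top⟩

noncomputable def empMeasure (ω : ℕ → List A) (m : ℕ) : Measure (List A) :=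
  (m : ENNReal)⁻¹ • ∑ i ∈ Finset.range m, Measure.dirac (ω i)

instance (ω : ℕ → List A) (m : ℕ) [NeZero m] : IsProbabilityMeasure (empMeasure ω m) := by
  constructor
  simp [empMeasure, ENNReal.inv_mul_cancel (NeZero.ne (m : ENNReal)) (ENNReal.natCast_ne_top m)]

theorem measureReal_empMeasure (ω : ℕ → List A) (m : ℕ) (X : Set (List A)) :
    (empMeasure ω m).real X = emp ω m X := by
  simp only [empMeasure, emp, Measure.real, Measure.smul_apply, Measure.coe_finsetSum,
    Finset.sum_apply, Measure.dirac_apply, smul_eq_mul, ENNReal.toReal_mul, ENNReal.toReal_inv,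
    ENNReal.toReal_natCast]
  rw [ENNReal.toReal_sum (fun i _ => by unfold Set.indicator; split_ifs <;> simp), div_eq_inv_mul]
  congr 1
  refine Finset.sum_congr rfl fun i _ => ?_
  by_cases h : ω i ∈ X <;> simp [h]

theorem emp_compl (ω : ℕ → List A) {k : ℕ} (hk : 0 < k) (X : Set (List A)) :
    emp ω k Xᶜ = 1 - emp ω k X := by
  have : NeZero k := ⟨hk.ne'⟩
  rw [← measureReal_empMeasure, ← measureReal_empMeasure, probReal_compl_eq_one_sub .of_discrete]

end Empirical

section Concentration
variable {A : Type*} {μ : Measure (ℕ → List A)} [IsProbabilityMeasure μ] {ν : Measure (List A)}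
  (hind : iIndepFun (fun i (ω : ℕ → List A) => ω i) μ) (hlaw : ∀ i, μ.map (fun ω => ω i) = ν)
include hind hlaw

theorem measureReal_add_le_emp_le (X : Set (List A)) {k : ℕ} (hk : 0 < k) {t : ℝ} (ht : 0 ≤ t) :
    μ.real {ω | ν.real X + t ≤ emp ω k X} ≤ Real.exp (-2 * k * t ^ 2) := by
  have hmean : ∀ i, μ[fun ω => X.indicator 1 (ω i)] = ν.real X := fun i => by
    rw [← hlaw i, map_measureReal_apply (measurable_pi_apply i) .of_discrete,
      ← integral_indicator_one (measurable_pi_apply i (MeasurableSet.of_discrete (s := X)))]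
    rfl
  have hsubG : ∀ i, HasSubgaussianMGF (fun ω => X.indicator 1 (ω i) - ν.real X)
      ((‖(1 : ℝ) - 0‖₊ / 2) ^ 2) μ := fun i => by
    rw [← hmean i]
    refine hasSubgaussianMGF_of_mem_Icc ((Measurable.of_discrete (f := X.indicator 1)).comp
      (measurable_pi_apply i)).aemeasurable (ae_of_all _ fun ω => ?_)
    by_cases h : ω i ∈ X <;> simp [h]
  have hZ : iIndepFun (fun i ω => X.indicator 1 (ω i) - ν.real X) μ :=
    hind.comp (fun _ x => X.indicator 1 x - ν.real X) fun _ => .of_discrete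
  have hk' : (0 : ℝ) < k := Nat.cast_pos.2 hk
  have hset : {ω | ν.real X + t ≤ emp ω k X} =
      {ω | k * t ≤ ∑ i ∈ Finset.range k, (X.indicator 1 (ω i) - ν.real X)} := by
    ext ω
    simp only [mem_ofPred_eq, emp, Finset.sum_sub_distrib, Finset.sum_const, Finset.card_range,
      nsmul_eq_mul, le_div_iff₀ hk', Pi.one_def]
    constructor <;> intro h <;> linarith
  rw [hset]
  refine (HasSubgaussianMGF.measure_sum_range_ge_le_of_iIndepFun hZ (fun i _ => hsubG i)
    (by positivity)).trans_eq ?_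
  norm_num
  field_simp
  ring

theorem measureReal_le_abs_emp_sub_le (X : Set (List A)) {k : ℕ} (hk : 0 < k) {t : ℝ} (ht : 0 ≤ t) :
    μ.real {ω | t ≤ |emp ω k X - ν.real X|} ≤ 2 * Real.exp (-2 * k * t ^ 2) := by
  have : IsProbabilityMeasure ν :=
    hlaw 0 ▸ Measure.isProbabilityMeasure_map (measurable_pi_apply 0).aemeasurable
  have hsub : {ω | t ≤ |emp ω k X - ν.real X|} ⊆
      {ω | ν.real X + t ≤ emp ω k X} ∪ {ω | ν.real Xᶜ + t ≤ emp ω k Xᶜ} := fun ω hω => by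
    simp only [mem_union, mem_ofPred_eq] at hω ⊢
    rw [probReal_compl_eq_one_sub .of_discrete, emp_compl ω hk]
    rcases le_abs'.1 hω with h | h
    · right; linarith
    · left; linarith
  calc μ.real {ω | t ≤ |emp ω k X - ν.real X|}
      ≤ μ.real {ω | ν.real X + t ≤ emp ω k X} + μ.real {ω | ν.real Xᶜ + t ≤ emp ω k Xᶜ} :=
        (measureReal_mono hsub).trans (measureReal_union_le _ _)
    _ ≤ 2 * Real.exp (-2 * k * t ^ 2) := by
      linarith [measureReal_add_le_emp_le hind hlaw X hk ht,
        measureReal_add_le_emp_le hind hlaw Xᶜ hk ht]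

end Concentration

theorem summable_rpow_mul_exp_neg_mul_rpow {s p a : ℝ} (hp : 0 < p) (ha : 0 < a) :
    Summable fun k : ℕ => (k : ℝ) ^ s * Real.exp (-a * (k : ℝ) ^ p) := by
  have hexp := (isLittleO_exp_neg_mul_rpow_atTop ha (-(s + 2) / p)).comp_tendsto
    ((tendsto_rpow_atTop hp).comp tendsto_natCast_atTop_atTop)
  have hprod := (Asymptotics.isBigO_refl (fun k : ℕ => (k : ℝ) ^ s) atTop).mul_isLittleO hexp
  refine summable_of_isBigO_nat (Real.summable_nat_rpow.2 (by norm_num : (-2 : ℝ) < -1))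
    (hprod.isBigO.congr' (Eventually.of_forall fun _ => rfl) ?_)
  filter_upwards [eventually_gt_atTop 0] with k hk
  have hk' : (0 : ℝ) < k := Nat.cast_pos.2 hk
  simp only [Function.comp_apply]
  rw [← Real.rpow_mul hk'.le, ← Real.rpow_add hk', mul_div_cancel₀ _ hp.ne']
  ring_nf

theorem ae_eventually_notMem_of_summable_measureReal {α : Type*} [MeasurableSpace α]
    {μ : Measure α} [IsFiniteMeasure μ] {s : ℕ → Set α} (hs : Summable fun k => μ.real (s k)) :
    ∀ᵐ x ∂μ, ∀ᶠ k in atTop, x ∉ s k := by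
  refine ae_eventually_notMem ?_
  have hsum : ∑' k, μ (s k) = ENNReal.ofReal (∑' k, μ.real (s k)) := by
    rw [ENNReal.ofReal_tsum_of_nonneg (fun _ => measureReal_nonneg) hs]
    exact tsum_congr fun k => (ofReal_measureReal (measure_ne_top μ _)).symm
  exact hsum ▸ ENNReal.ofReal_ne_top

section GridDeviation
variable {A : Type*} [LinearOrder A]

def gridDeviationSet (ν : Measure (List A)) (k : ℕ) (t : ℝ) : Set (ℕ → List A) :=
  ⋃ j ∈ Finset.range (⌊1 / t⌋₊ + 1),
    ({ω | t ≤ |emp ω k (gridSet ν t j) - ν.real (gridSet ν t j)|} ∪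
      {ω | t ≤ |emp ω k (lowerGridSet ν t j) -
        ν.real (lowerGridSet ν t j)|})

theorem abs_emp_pre_sub_le_of_notMem_gridDeviationSet [Countable A]
    {ν : Measure (List A)} [IsProbabilityMeasure ν] {ω : ℕ → List A} {k : ℕ} (hk : 0 < k)
    {t : ℝ} (ht : 0 < t) (hω : ω ∉ gridDeviationSet ν k t) (v : List A) :
    |emp ω k (pre v) - ν.real (pre v)| ≤ 4 * t := by
  have : NeZero k := ⟨hk.ne'⟩
  have hj : ∀ j : ℕ, j * t ≤ 1 → j ∈ Finset.range (⌊1 / t⌋₊ + 1) := fun j hj =>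
    Finset.mem_range_succ_iff.2 (Nat.le_floor ((le_div_iff₀ ht).2 hj))
  simp only [gridDeviationSet, mem_iUnion, mem_union, mem_ofPred_eq, not_exists, not_or,
    not_le] at hω
  have hclose : IsGridClose ν (empMeasure ω k) t := fun j hjt => by
    simpa only [measureReal_empMeasure] using And.imp le_of_lt le_of_lt (hω j (hj j hjt))
  simpa only [measureReal_empMeasure] using (ordConnected_pre v).abs_measureReal_sub_le ht hclose

theorem measureReal_gridDeviationSet_le {μ : Measure (ℕ → List A)} [IsProbabilityMeasure μ]
    {ν : Measure (List A)} (hind : iIndepFun (fun i (ω : ℕ → List A) => ω i) μ)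
    (hlaw : ∀ i, μ.map (fun ω => ω i) = ν) {k : ℕ} (hk : 0 < k) {t : ℝ} (ht : 0 < t)
    (ht1 : t ≤ 1) :
    μ.real (gridDeviationSet ν k t) ≤ 8 / t * Real.exp (-2 * k * t ^ 2) := by
  have hfloor : (⌊1 / t⌋₊ : ℝ) + 1 ≤ 2 / t := by
    have h1 : 1 ≤ 1 / t := (one_le_div ht).2 ht1
    linarith [Nat.floor_le (zero_le_one.trans h1), show 2 / t = 1 / t + 1 / t by ring]
  calc μ.real (gridDeviationSet ν k t)
      ≤ ∑ j ∈ Finset.range (⌊1 / t⌋₊ + 1), 4 * Real.exp (-2 * k * t ^ 2) := by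
        refine (measureReal_biUnion_finset_le _ _).trans (Finset.sum_le_sum fun j _ => ?_)
        refine (measureReal_union_le _ _).trans ?_
        linarith [measureReal_le_abs_emp_sub_le hind hlaw (gridSet ν t j) hk ht.le,
          measureReal_le_abs_emp_sub_le hind hlaw (lowerGridSet ν t j) hk ht.le]
    _ = (⌊1 / t⌋₊ + 1) * (4 * Real.exp (-2 * k * t ^ 2)) := by
        rw [Finset.sum_const, Finset.card_range, nsmul_eq_mul]; push_cast; ring
    _ ≤ 2 / t * (4 * Real.exp (-2 * k * t ^ 2)) := by gcongr
    _ = 8 / t * Real.exp (-2 * k * t ^ 2) := by ring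

end GridDeviation

theorem ae_eventually_abs_emp_pre_sub_le {A : Type*} [LinearOrder A] [Countable A]
    {μ : Measure (ℕ → List A)} [IsProbabilityMeasure μ] {ν : Measure (List A)}
    (hind : iIndepFun (fun i (ω : ℕ → List A) => ω i) μ) (hlaw : ∀ i, μ.map (fun ω => ω i) = ν)
    {c : ℝ} (hc : 0 < c) (hc1 : c ≤ 1) :
    ∀ᵐ ω ∂μ, ∀ᶠ k in atTop, ∀ v : List A,
      |emp ω k (pre v) - ν.real (pre v)| ≤ 4 * (c * (k : ℝ) ^ (-(1 / 3) : ℝ)) := by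
  have : IsProbabilityMeasure ν :=
    hlaw 0 ▸ Measure.isProbabilityMeasure_map (measurable_pi_apply 0).aemeasurable
  set t : ℕ → ℝ := fun k => c * (k : ℝ) ^ (-(1 / 3) : ℝ)
  have ht : ∀ k, 0 < k → 0 < t k := fun k hk =>
    mul_pos hc (Real.rpow_pos_of_pos (Nat.cast_pos.2 hk) _)
  have ht1 : ∀ k, 0 < k → t k ≤ 1 := fun k hk => mul_le_one₀ hc1 (by positivity)
    (Real.rpow_le_one_of_one_le_of_nonpos (Nat.one_le_cast.2 hk) (by norm_num))
  have hrate : ∀ k, 0 < k → 8 / t k * Real.exp (-2 * k * t k ^ 2) =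
      8 / c * ((k : ℝ) ^ (1 / 3 : ℝ) * Real.exp (-(2 * c ^ 2) * (k : ℝ) ^ (1 / 3 : ℝ))) := by
    intro k hk
    have hk' : (0 : ℝ) < k := Nat.cast_pos.2 hk
    have hy : 0 < (k : ℝ) ^ (1 / 3 : ℝ) := Real.rpow_pos_of_pos hk' _
    have hneg : (k : ℝ) ^ (-(1 / 3) : ℝ) = ((k : ℝ) ^ (1 / 3 : ℝ))⁻¹ := Real.rpow_neg hk'.le _
    have hcube : (k : ℝ) = ((k : ℝ) ^ (1 / 3 : ℝ)) ^ 3 := by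
      rw [← Real.rpow_natCast, ← Real.rpow_mul hk'.le]; norm_num
    simp only [t, hneg]
    generalize (k : ℝ) ^ (1 / 3 : ℝ) = y at hy hcube ⊢
    rw [hcube]
    field_simp
  have hsum : Summable fun k => μ.real (gridDeviationSet ν k (t k)) := by
    refine Summable.of_norm_bounded_eventually_nat
      ((summable_rpow_mul_exp_neg_mul_rpow (s := 1 / 3) (by norm_num : (0 : ℝ) < 1 / 3)
        (by positivity : 0 < 2 * c ^ 2)).mul_left (8 / c)) ?_
    filter_upwards [eventually_gt_atTop 0] with k hk
    rw [Real.norm_of_nonneg measureReal_nonneg, ← hrate k hk]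
    exact measureReal_gridDeviationSet_le hind hlaw hk (ht k hk) (ht1 k hk)
  filter_upwards [ae_eventually_notMem_of_summable_measureReal hsum] with ω hω
  filter_upwards [hω, eventually_gt_atTop 0] with k hk hk0
  exact abs_emp_pre_sub_le_of_notMem_gridDeviationSet hk0 (ht k hk0) hk

section Residual
variable {A : Type*} {P : List A → ℝ}

theorem tsum_pre_eq_tsum_append (v : List A) : ∑' x : pre v, P x = ∑' w, P (v ++ w) := by
  rw [tsum_subtype, ← (List.append_right_injective v).tsum_eq]
  · exact tsum_congr fun w =>
      Set.indicator_of_mem (show v ++ w ∈ pre v from List.prefix_append v w) P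
  · exact (Set.support_indicator_subset).trans fun x ⟨w, hw⟩ => ⟨w, hw⟩

theorem tsum_residualLang_append (u w : List A) :
    ∑' w', residualLang P u (w ++ w') = (∑' x : pre (u ++ w), P x) / ∑' x : pre u, P x := by
  simp only [residualLang, tsum_div_const, tsum_pre_eq_tsum_append, List.append_assoc]

theorem tsum_pre_append_div_eq_sum (hP : Summable P) {n : ℕ} (u : Fin (n + 1) → List A)
    (α : Fin n → ℝ)
    (hcomb : ∀ w, residualLang P (u 0) w = ∑ i : Fin n, α i * residualLang P (u i.succ) w)
    (w : List A) :
    (∑' x : pre (u 0 ++ w), P x) / ∑' x : pre (u 0), P x =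
      ∑ i : Fin n, α i * ((∑' x : pre (u i.succ ++ w), P x) / ∑' x : pre (u i.succ), P x) := by
  have hsummable : ∀ i : Fin n, Summable fun w' => α i * residualLang P (u i.succ) (w ++ w') :=
    fun i => by
      have hs : Summable fun w' => P (u i.succ ++ w ++ w') :=
        hP.comp_injective (List.append_right_injective _)
      simp only [residualLang, ← List.append_assoc]
      exact (hs.div_const _).mul_left _
  rw [← tsum_residualLang_append, tsum_congr fun w' => hcomb (w ++ w'),
    Summable.tsum_finsetSum fun i _ => hsummable i]
  exact Finset.sum_congr rfl fun i _ => by rw [tsum_mul_left, tsum_residualLang_append]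

end Residual

theorem abs_div_sub_div_le {g q e p δ m : ℝ} (hm : 0 < m) (hq : 0 ≤ q) (hqp : q ≤ p) (hme : m ≤ e)
    (hmp : m ≤ p) (hg : |g - q| ≤ δ) (he : |e - p| ≤ δ) : |g / e - q / p| ≤ 2 * δ / m := by
  have he0 : 0 < e := hm.trans_le hme
  have hp0 : 0 < p := hm.trans_le hmp
  have hqp' : q / p ≤ 1 := (div_le_one hp0).2 hqp
  have hδ : 0 ≤ δ := (abs_nonneg _).trans hg
  have hnum : |(g - q) + q / p * (p - e)| ≤ 2 * δ :=
    calc |(g - q) + q / p * (p - e)| ≤ |g - q| + q / p * |p - e| := by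
          refine (abs_add_le _ _).trans ?_
          rw [abs_mul, abs_of_nonneg (div_nonneg hq hp0.le)]
      _ ≤ δ + 1 * δ :=
          add_le_add hg (mul_le_mul hqp' (by rwa [abs_sub_comm]) (abs_nonneg _) zero_le_one)
      _ = 2 * δ := by ring
  have key : g / e - q / p = ((g - q) + q / p * (p - e)) / e := by field_simp; ring
  rw [key, abs_div, abs_of_pos he0]
  calc _ ≤ 2 * δ / e := by gcongr
    _ ≤ 2 * δ / m := by gcongr

theorem abs_sub_sum_mul_le {n : ℕ} {a b : Fin (n + 1) → ℝ} (α : Fin n → ℝ)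
    (hb : b 0 = ∑ i, α i * b i.succ) {B : ℝ} (hab : ∀ i, |a i - b i| ≤ B) :
    |a 0 - ∑ i, α i * a i.succ| ≤ (1 + ∑ i, |α i|) * B := by
  have key : a 0 - ∑ i, α i * a i.succ = (a 0 - b 0) - ∑ i, α i * (a i.succ - b i.succ) := by
    simp only [hb, mul_sub, Finset.sum_sub_distrib]; ring
  rw [key, add_mul, one_mul, Finset.sum_mul]
  refine (abs_sub _ _).trans (add_le_add (hab 0) ((Finset.abs_sum_le_sum_abs _ _).trans ?_))
  exact Finset.sum_le_sum fun i _ => by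
    rw [abs_mul]; exact mul_le_mul_of_nonneg_left (hab i.succ) (abs_nonneg _)

theorem isSolution_of_abs_emp_pre_sub_le {A : Type*} {n : ℕ} (u : Fin (n + 1) → List A)
    (α : Fin n → ℝ) {ν : Measure (List A)} [IsFiniteMeasure ν]
    (hratio : ∀ w, ν.real (pre (u 0 ++ w)) / ν.real (pre (u 0)) =
      ∑ i : Fin n, α i * (ν.real (pre (u i.succ ++ w)) / ν.real (pre (u i.succ))))
    {m δ : ℝ} (hm : 0 < m) (hmν : ∀ i, m ≤ ν.real (pre (u i))) (hδ : δ ≤ m / 2)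
    {ω : ℕ → List A} {k : ℕ} (hdev : ∀ v, |emp ω k (pre v) - ν.real (pre v)| ≤ δ) :
    (∀ i, 0 < emp ω k (pre (u i))) ∧
      IsSolution (fun i : Fin n => u i.succ) (u 0) ω k ((1 + ∑ i, |α i|) * (4 * δ / m)) α := by
  have hemp : ∀ i, m / 2 ≤ emp ω k (pre (u i)) := fun i => by
    linarith [(abs_le.1 (hdev (u i))).1, hmν i]
  refine ⟨fun i => by linarith [hemp i], ?_, fun w _ => ?_⟩
  · simpa [div_self (hm.trans_le (hmν _)).ne'] using (hratio []).symm
  · convert abs_sub_sum_mul_le (a := fun i => emp ω k (pre (u i ++ w)) / emp ω k (pre (u i)))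
      (b := fun i => ν.real (pre (u i ++ w)) / ν.real (pre (u i))) α (hratio w)
      (fun i => abs_div_sub_div_le (half_pos hm) measureReal_nonneg
        (measureReal_mono fun x hx => (List.prefix_append (u i) w).trans hx) (hemp i)
        (by linarith [hmν i]) (hdev _) (hdev _)) using 2
    ring

theorem statement14_general {A : Type*} [Fintype A]
    (P : List A → ℝ) (hP : IsStochastic P) {n : ℕ} (u : Fin (n + 1) → List A)
    (hres : ∀ i, 0 < ∑' v : pre (u i), P (v : List A))
    (α : Fin n → ℝ)
    (hcomb : ∀ w, residualLang P (u 0) w = ∑ i : Fin n, α i * residualLang P (u i.succ) w)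
    (μ : Measure (ℕ → List A)) (hμ : IsIIDProduct P μ) :
    ∀ᵐ ω ∂μ, ∃ K : ℕ, ∀ k ≥ K,
      (∀ i, 0 < emp ω k (pre (u i))) ∧
      ∃ x : Fin n → ℝ,
        IsSolution (fun i : Fin n => u i.succ) (u 0) ω k ((k : ℝ) ^ (-(1 / 3) : ℝ)) x := by
  -- any linear order on `A` makes every prefix set an interval for the lexicographic order
  let : LinearOrder A := LinearOrder.lift' _ (Fintype.equivFin A).injective
  have := hμ.isProbabilityMeasure
  set ν := μ.map (fun ω => ω 0)
  have hν : ∀ X, ν.real X = ∑' x : X, P x := hμ.measureReal_map_eval hP 0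
  have hratio := tsum_pre_append_div_eq_sum hP.2.summable u α hcomb
  simp only [← hν] at hratio hres
  obtain ⟨i₀, -, hi₀⟩ :=
    Finset.univ.exists_min_image (fun i => ν.real (pre (u i))) Finset.univ_nonempty
  set m := ν.real (pre (u i₀))
  have hm : 0 < m := hres i₀
  set S := 1 + ∑ i, |α i|
  have hS : 1 ≤ S := le_add_of_nonneg_right (Finset.sum_nonneg fun i _ => abs_nonneg _)
  -- with `t = m k^{-1/3} / (16 S)`, a deviation `4t` on prefix sets gives the system error
  -- `S · 16t / m = k^{-1/3}`
  have hc1 : m / (16 * S) ≤ 1 :=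
    div_le_one_of_le₀ (by linarith [measureReal_le_one (μ := ν) (s := pre (u i₀))]) (by positivity)
  filter_upwards [ae_eventually_abs_emp_pre_sub_le hμ.iIndepFun hμ.map_eval
    (div_pos hm (by positivity)) hc1] with ω hω
  obtain ⟨K, hK⟩ := eventually_atTop.1 (hω.and (eventually_gt_atTop 0))
  refine ⟨K, fun k hk => ?_⟩
  obtain ⟨hdev, hk0⟩ := hK k hk
  have hr : (k : ℝ) ^ (-(1 / 3) : ℝ) ≤ 1 :=
    Real.rpow_le_one_of_one_le_of_nonpos (Nat.one_le_cast.2 hk0) (by norm_num)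
  obtain ⟨hpos, hsol⟩ := isSolution_of_abs_emp_pre_sub_le u α hratio hm
    (fun i => hi₀ i (Finset.mem_univ i)) (by field_simp; nlinarith [hr]) hdev
  refine ⟨hpos, α, ?_⟩
  convert hsol using 1
  field_simp
  ring

theorem statement14 {A : Type*} [Fintype A] [Nonempty A]
    (P : List A → ℝ) (hP : IsStochastic P) {n : ℕ} (u : Fin (n + 1) → List A)
    (hres : ∀ i, 0 < ∑' v : pre (u i), P (v : List A))
    (α : Fin n → ℝ)
    (hcomb : ∀ w, residualLang P (u 0) w = ∑ i : Fin n, α i * residualLang P (u i.succ) w)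
    (μ : Measure (ℕ → List A)) (hμ : IsIIDProduct P μ) :
    ∀ᵐ ω ∂μ, ∃ K : ℕ, ∀ k ≥ K,
      (∀ i, 0 < emp ω k (pre (u i))) ∧
      ∃ x : Fin n → ℝ,
        IsSolution (fun i : Fin n => u i.succ) (u 0) ω k ((k : ℝ) ^ (-(1 / 3) : ℝ)) x :=
  statement14_general P hP u hres α hcomb μ hμ
end
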